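/- Let f be convex differentiable and let x_R, λ_A, λ_E ≥ 0 satisfy the KKT conditions of min{ f(x) : A x = b, E x ≤ f₀ } with value z_R. Let ψ : ℝᵐ → ℝ≥0 be a level-bounded augmenting function (ψ(0) = 0, ψ(u) > 0 for u ≠ 0, sublevel sets { u : ψ(u) ≤ δ } bounded with diameter → 0 as δ → 0). Then for any ρ > 0, every x with E x ≤ f₀ and f(x) + λ_Aᵀ(b − A x) + ρψ(b − A x) ≤ z_IP satisfies ψ(b − A x) ≤ (z_IP − z_R)/ρ; consequently ‖b − A x‖_∞ ≤ κ_ρ for some finite κ_ρ with κ_ρ → 0 as ρ → ∞. -/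

import Mathlib

/-!
Convexity of `f` at the KKT point `x_R`, together with stationarity, `A x_R = b`, `λ_E ≥ 0` and
complementary slackness, shows that the Lagrangian `f x + ⟪λ_A, b - A x⟫` is at least
`z_R = f x_R` on `{x | E x ≤ f₀}`. Hence on the augmented sublevel set `ρ ψ(b - A x) ≤ z_IP - z_R`,
and `‖b - A x‖` is bounded by the radius of the sublevel set `{ψ ≤ (z_IP - z_R)/ρ}`, which is
finite since `ψ` is level-bounded and tends to `0` as the level tends to `0`.
-/

open scoped RealInnerProductSpace Matrix

def toEuc {m : ℕ} (v : Fin m → ℝ) : EuclideanSpace ℝ (Fin m) := WithLp.toLp 2 v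

open Filter Topology

lemma inner_toEuc_transpose_mulVec {m n : ℕ} (M : Matrix (Fin m) (Fin n) ℝ) (v : Fin m → ℝ)
    (w : EuclideanSpace ℝ (Fin n)) : ⟪toEuc (Mᵀ *ᵥ v), w⟫ = v ⬝ᵥ (M *ᵥ w) := by
  simp only [toEuc, EuclideanSpace.inner_eq_star_dotProduct, star_trivial]
  rw [dotProduct_comm, Matrix.mulVec_transpose, Matrix.dotProduct_mulVec]

lemma dotProduct_sub_nonpos_of_complementary {p : ℕ} {lam a a₀ c : Fin p → ℝ}
    (hlam : ∀ i, 0 ≤ lam i) (ha : ∀ i, a i ≤ c i) (hcomp : lam ⬝ᵥ (c - a₀) = 0) :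
    lam ⬝ᵥ (a - a₀) ≤ 0 := by
  have hle : lam ⬝ᵥ (a - c) ≤ 0 :=
    Finset.sum_nonpos fun i _ => mul_nonpos_of_nonneg_of_nonpos (hlam i) (sub_nonpos.2 (ha i))
  rwa [← sub_add_sub_cancel a c a₀, dotProduct_add, hcomp, add_zero]

theorem le_lagrangian_of_kkt {n m p : ℕ} {f : EuclideanSpace ℝ (Fin n) → ℝ}
    {g : EuclideanSpace ℝ (Fin n) → EuclideanSpace ℝ (Fin n)}
    (hconv : ∀ x y : EuclideanSpace ℝ (Fin n), f x + ⟪g x, y - x⟫ ≤ f y)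
    {A : Matrix (Fin m) (Fin n) ℝ} {E : Matrix (Fin p) (Fin n) ℝ}
    {b : EuclideanSpace ℝ (Fin m)} {f₀ : Fin p → ℝ} {xR : EuclideanSpace ℝ (Fin n)}
    {lamA : EuclideanSpace ℝ (Fin m)} {lamE : Fin p → ℝ}
    (hfeasA : toEuc (A *ᵥ xR) = b)
    (hstat : g xR = toEuc (Aᵀ *ᵥ lamA) - toEuc (Eᵀ *ᵥ lamE))
    (hcompE : lamE ⬝ᵥ (f₀ - E *ᵥ xR) = 0) (hlamE : ∀ i, 0 ≤ lamE i)
    {x : EuclideanSpace ℝ (Fin n)} (hx : ∀ i, (E *ᵥ x) i ≤ f₀ i) :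
    f xR ≤ f x + ⟪lamA, b - toEuc (A *ᵥ x)⟫ := by
  have hgrad : ⟪g xR, x - xR⟫ = lamA ⬝ᵥ (A *ᵥ x - A *ᵥ xR) - lamE ⬝ᵥ (E *ᵥ x - E *ᵥ xR) := by
    rw [hstat, inner_sub_left, inner_toEuc_transpose_mulVec, inner_toEuc_transpose_mulVec]
    simp only [WithLp.ofLp_sub, Matrix.mulVec_sub]
  have hslack : lamE ⬝ᵥ (E *ᵥ x - E *ᵥ xR) ≤ 0 :=
    dotProduct_sub_nonpos_of_complementary hlamE hx hcompE
  have hres : ⟪lamA, b - toEuc (A *ᵥ x)⟫ = -(lamA ⬝ᵥ (A *ᵥ x - A *ᵥ xR)) := by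
    rw [← hfeasA, ← neg_sub, inner_neg_right]
    simp [toEuc, EuclideanSpace.inner_eq_star_dotProduct, dotProduct_comm]
  linarith [hconv xR x]

section SublevelRadius

variable {V : Type*} [SeminormedAddCommGroup V]

/-- `sSup` gives the junk value `0` when `{u | ψ u ≤ δ}` is unbounded. -/
noncomputable def sublevelRadius (ψ : V → ℝ) (δ : ℝ) : ℝ :=
  sSup (norm '' {u | ψ u ≤ δ})

variable {ψ : V → ℝ} {δ : ℝ}

lemma norm_le_sublevelRadius (hbdd : ∀ δ > 0, Bornology.IsBounded {u | ψ u ≤ δ}) {u : V}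
    (hu : ψ u ≤ δ) : ‖u‖ ≤ sublevelRadius ψ δ := by
  have hsub : {u | ψ u ≤ δ} ⊆ {u | ψ u ≤ max δ 1} := fun v (hv : ψ v ≤ δ) => le_max_of_le_left hv
  obtain ⟨R, hR⟩ := ((hbdd _ (lt_max_of_lt_right one_pos)).subset hsub).exists_norm_le
  exact le_csSup ⟨R, by rintro _ ⟨v, hv, rfl⟩; exact hR v hv⟩ ⟨u, hu, rfl⟩

lemma sublevelRadius_nonneg : 0 ≤ sublevelRadius ψ δ :=
  Real.sSup_nonneg <| by rintro _ ⟨u, -, rfl⟩; exact norm_nonneg u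

lemma sublevelRadius_le {ε : ℝ} (hε : 0 ≤ ε) (h : ∀ u, ψ u ≤ δ → ‖u‖ ≤ ε) :
    sublevelRadius ψ δ ≤ ε :=
  Real.sSup_le (by rintro _ ⟨u, hu, rfl⟩; exact h u hu) hε

lemma tendsto_sublevelRadius_nhds_zero
    (hdiam : ∀ ε > 0, ∃ δ > 0, ∀ u, ψ u ≤ δ → ‖u‖ ≤ ε) :
    Tendsto (sublevelRadius ψ) (𝓝 0) (𝓝 0) := by
  refine Metric.tendsto_nhds.2 fun ε hε => ?_
  obtain ⟨δ, hδ, hδε⟩ := hdiam (ε / 2) (half_pos hε)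
  filter_upwards [eventually_le_nhds hδ] with δ' hδ'
  rw [Real.dist_0_eq_abs, abs_of_nonneg sublevelRadius_nonneg]
  exact (sublevelRadius_le (half_pos hε).le fun u hu => hδε u (hu.trans hδ')).trans_lt
    (half_lt_self hε)

end SublevelRadius

theorem augmented_sublevel_violation_bound_general
    {n m p : ℕ}
    (f : EuclideanSpace ℝ (Fin n) → ℝ)
    (g : EuclideanSpace ℝ (Fin n) → EuclideanSpace ℝ (Fin n))
    (hconv : ∀ x y : EuclideanSpace ℝ (Fin n), f x + ⟪g x, y - x⟫ ≤ f y)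
    (A : Matrix (Fin m) (Fin n) ℝ) (E : Matrix (Fin p) (Fin n) ℝ)
    (b : EuclideanSpace ℝ (Fin m)) (f₀ : Fin p → ℝ)
    (xR : EuclideanSpace ℝ (Fin n)) (zR zIP : ℝ)
    (lamA : EuclideanSpace ℝ (Fin m)) (lamE : Fin p → ℝ)
    -- KKT conditions of the continuous relaxation at `x_R`
    (hfeasA : toEuc (A.mulVec xR) = b)
    (hval : f xR = zR)
    (hstat : g xR = toEuc (A.transpose.mulVec lamA) - toEuc (E.transpose.mulVec lamE))
    (hcompE : lamE ⬝ᵥ (f₀ - E.mulVec xR) = 0)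
    (hlamE : ∀ i, 0 ≤ lamE i)
    -- `ψ` is a level-bounded augmenting function
    (ψ : EuclideanSpace ℝ (Fin m) → ℝ)
    (hψbdd : ∀ δ : ℝ, 0 < δ → Bornology.IsBounded {u : EuclideanSpace ℝ (Fin m) | ψ u ≤ δ})
    (hψdiam : ∀ ε : ℝ, 0 < ε → ∃ δ : ℝ, 0 < δ ∧
      ∀ u : EuclideanSpace ℝ (Fin m), ψ u ≤ δ → ‖u‖ ≤ ε) :
    (∀ ρ : ℝ, 0 < ρ → ∀ x : EuclideanSpace ℝ (Fin n),
      (∀ i, E.mulVec x i ≤ f₀ i) →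
      f x + ⟪lamA, b - toEuc (A.mulVec x)⟫ + ρ * ψ (b - toEuc (A.mulVec x)) ≤ zIP →
      ψ (b - toEuc (A.mulVec x)) ≤ (zIP - zR) / ρ) ∧
    (∃ κ : ℝ → ℝ, Filter.Tendsto κ Filter.atTop (nhds 0) ∧
      ∀ ρ : ℝ, 0 < ρ → ∀ x : EuclideanSpace ℝ (Fin n),
        (∀ i, E.mulVec x i ≤ f₀ i) →
        f x + ⟪lamA, b - toEuc (A.mulVec x)⟫ + ρ * ψ (b - toEuc (A.mulVec x)) ≤ zIP →
        ‖b - toEuc (A.mulVec x)‖ ≤ κ ρ) := by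
  have hviolation : ∀ ρ : ℝ, 0 < ρ → ∀ x : EuclideanSpace ℝ (Fin n),
      (∀ i, E.mulVec x i ≤ f₀ i) →
      f x + ⟪lamA, b - toEuc (A.mulVec x)⟫ + ρ * ψ (b - toEuc (A.mulVec x)) ≤ zIP →
      ψ (b - toEuc (A.mulVec x)) ≤ (zIP - zR) / ρ := by
    intro ρ hρ x hx hle
    have hdual := le_lagrangian_of_kkt hconv hfeasA hstat hcompE hlamE hx
    rw [le_div_iff₀ hρ]
    linarith
  refine ⟨hviolation, fun ρ => sublevelRadius ψ ((zIP - zR) / ρ), ?_, ?_⟩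
  · exact (tendsto_sublevelRadius_nhds_zero hψdiam).comp
      (tendsto_const_nhds.div_atTop tendsto_id)
  · intro ρ hρ x hx hle
    exact norm_le_sublevelRadius hψbdd (hviolation ρ hρ x hx hle)

/-- Lemma 10 of the paper, first part.
With KKT multipliers of the continuous relaxation and a level-bounded augmenting
function `ψ`, every `x` in the augmented-Lagrangian sublevel set satisfies
`ψ(b − A x) ≤ (z_IP − z_R)/ρ`; consequently there is a finite bound `κ ρ` on
`‖b − A x‖` with `κ ρ → 0` as `ρ → ∞`. -/
theorem augmented_sublevel_violation_bound
    {n m p : ℕ}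
    (f : EuclideanSpace ℝ (Fin n) → ℝ)
    (g : EuclideanSpace ℝ (Fin n) → EuclideanSpace ℝ (Fin n))
    (hconv : ∀ x y : EuclideanSpace ℝ (Fin n), f x + ⟪g x, y - x⟫ ≤ f y)
    (A : Matrix (Fin m) (Fin n) ℝ) (E : Matrix (Fin p) (Fin n) ℝ)
    (b : EuclideanSpace ℝ (Fin m)) (f₀ : Fin p → ℝ)
    (xR : EuclideanSpace ℝ (Fin n)) (zR zIP : ℝ)
    (lamA : EuclideanSpace ℝ (Fin m)) (lamE : Fin p → ℝ)
    -- KKT conditions of the continuous relaxation at `x_R`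
    (hfeasA : toEuc (A.mulVec xR) = b)
    (hfeasE : ∀ i, E.mulVec xR i ≤ f₀ i)
    (hval : f xR = zR)
    (hstat : g xR = toEuc (A.transpose.mulVec lamA) - toEuc (E.transpose.mulVec lamE))
    (hcompE : lamE ⬝ᵥ (f₀ - E.mulVec xR) = 0)
    (hcompA : lamA ⬝ᵥ (toEuc (A.mulVec xR) - b) = 0)
    (hlamE : ∀ i, 0 ≤ lamE i)
    (hzIP : zR ≤ zIP)
    -- `ψ` is a level-bounded augmenting function
    (ψ : EuclideanSpace ℝ (Fin m) → ℝ)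
    (hψ0 : ψ 0 = 0) (hψpos : ∀ u : EuclideanSpace ℝ (Fin m), u ≠ 0 → 0 < ψ u)
    (hψnonneg : ∀ u, 0 ≤ ψ u)
    (hψbdd : ∀ δ : ℝ, 0 < δ → Bornology.IsBounded {u : EuclideanSpace ℝ (Fin m) | ψ u ≤ δ})
    (hψdiam : ∀ ε : ℝ, 0 < ε → ∃ δ : ℝ, 0 < δ ∧
      ∀ u : EuclideanSpace ℝ (Fin m), ψ u ≤ δ → ‖u‖ ≤ ε) :
    (∀ ρ : ℝ, 0 < ρ → ∀ x : EuclideanSpace ℝ (Fin n),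
      (∀ i, E.mulVec x i ≤ f₀ i) →
      f x + ⟪lamA, b - toEuc (A.mulVec x)⟫ + ρ * ψ (b - toEuc (A.mulVec x)) ≤ zIP →
      ψ (b - toEuc (A.mulVec x)) ≤ (zIP - zR) / ρ) ∧
    (∃ κ : ℝ → ℝ, Filter.Tendsto κ Filter.atTop (nhds 0) ∧
      ∀ ρ : ℝ, 0 < ρ → ∀ x : EuclideanSpace ℝ (Fin n),
        (∀ i, E.mulVec x i ≤ f₀ i) →
        f x + ⟪lamA, b - toEuc (A.mulVec x)⟫ + ρ * ψ (b - toEuc (A.mulVec x)) ≤ zIP →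
        ‖b - toEuc (A.mulVec x)‖ ≤ κ ρ) :=
  augmented_sublevel_violation_bound_general f g hconv A E b f₀ xR zR zIP lamA lamE hfeasA hval
    hstat hcompE hlamE ψ hψbdd hψdiam
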